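/- arXiv:2505.21601 — 4 statements merged into one kernel-verified Lean document; each statement's English description precedes it below -/
import Mathlib

section
/- Let γ(t) = (t^m, a t^n + O(t^{n+1})) with n > m ≥ 1, a ≠ 0, and n ≠ 2m. Then v_γ(t) = (x'² + y'²)(x'y''' − x'''y') + 3(x'x'' + y'y'')(x''y' − x'y'') has order 3m + n − 6. -/
open PowerSeries

lemma coeff_derivativeFun' (f : PowerSeries ℂ) (n : ℕ) :
    coeff n f.derivativeFun = coeff (n + 1) f * (n + 1) :=
  coeff_derivative f n

lemma deriv_C_X_pow (c : ℂ) (e : ℕ) :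
    derivativeFun (C c * X ^ e) = C (c * e) * X ^ (e - 1) := by
  ext j
  rw [coeff_derivativeFun', coeff_C_mul, coeff_C_mul, coeff_X_pow, coeff_X_pow]
  rcases eq_or_ne (j + 1) e with h | h
  · subst h
    rw [if_pos rfl, if_pos (by omega)]
    push_cast
    ring
  · rw [if_neg h]
    rcases eq_or_ne j (e - 1) with h2 | h2
    · have he : e = 0 := by omega
      subst he
      simp
    · rw [if_neg h2]
      ring

lemma ct (c : ℂ) (e : ℕ) (g : PowerSeries ℂ) (i : ℕ) :
    coeff i (C c * (X ^ e * g)) =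
      if e ≤ i then c * coeff (i - e) g else 0 := by
  rw [coeff_C_mul, coeff_X_pow_mul', mul_ite, mul_zero]

lemma ord2 {f g : PowerSeries ℂ} {p q : ℕ∞} (hf : p ≤ f.order) (hg : q ≤ g.order) :
    p + q ≤ (f * g).order :=
  le_trans (add_le_add hf hg) (le_order_mul f g)

lemma ordterm (c : ℂ) (e : ℕ) {g : PowerSeries ℂ} {p : ℕ∞} (hg : p ≤ g.order) :
    (e : ℕ∞) + p ≤ (C c * (X ^ e * g)).order := by
  have h1 : (e : ℕ∞) + p ≤ (X ^ e * g : PowerSeries ℂ).order :=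
    ord2 (le_of_eq (order_X_pow (R := ℂ) e).symm) hg
  exact le_trans h1 (le_trans (self_le_add_left _ _) (le_order_mul _ _))

lemma ordadd {f g : PowerSeries ℂ} {p : ℕ∞} (hf : p ≤ f.order) (hg : p ≤ g.order) :
    p ≤ (f + g).order :=
  le_trans (le_min hf hg) (min_order_le_order_add f g)

lemma ordneg {f : PowerSeries ℂ} {p : ℕ∞} (hf : p ≤ f.order) : p ≤ (-f).order := by
  refine le_order _ _ fun i hi => ?_
  rw [map_neg, coeff_of_lt_order i (lt_of_lt_of_le hi hf), neg_zero]

lemma ordsub {f g : PowerSeries ℂ} {p : ℕ∞} (hf : p ≤ f.order) (hg : p ≤ g.order) :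
    p ≤ (f - g).order := by
  rw [sub_eq_add_neg]; exact ordadd hf (ordneg hg)

/-- For `γ(t) = (t^m, a t^n + O(t^{n+1}))` with `n > m ≥ 1`, `a ≠ 0`, `n ≠ 2m` and
`3m + n ≥ 6`, the function
`v_γ = (x'² + y'²)(x'y''' - x'''y') + 3(x'x'' + y'y'')(x''y' - x'y'')`
has order `3m + n - 6`. -/
theorem order_vertex_function (m n : ℕ) (a : ℂ) (y : PowerSeries ℂ)
    (hm : 1 ≤ m) (hmn : m < n) (hn2m : n ≠ 2 * m) (h6 : 6 ≤ 3 * m + n) (ha : a ≠ 0)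
    (hyn : PowerSeries.coeff n y = a)
    (hylow : ∀ j < n, PowerSeries.coeff j y = 0) :
    letI x : PowerSeries ℂ := (X : PowerSeries ℂ) ^ m
    letI x' := x.derivativeFun
    letI x'' := x'.derivativeFun
    letI x''' := x''.derivativeFun
    letI y' := y.derivativeFun
    letI y'' := y'.derivativeFun
    letI y''' := y''.derivativeFun
    ((x' ^ 2 + y' ^ 2) * (x' * y''' - x''' * y') +
        3 * (x' * x'' + y' * y'') * (x'' * y' - x' * y'')).order
      = ((3 * m + n - 6 : ℕ) : ℕ∞) := by
  have hn3 : 3 ≤ n := by omega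
  set k := 3 * m + n - 6 with hk
  set y1 := y.derivativeFun with hy1
  set y2 := y1.derivativeFun with hy2
  set y3 := y2.derivativeFun with hy3
  -- explicit monomial forms of x derivatives
  have hx1 : ((X : PowerSeries ℂ) ^ m).derivativeFun = C (m : ℂ) * X ^ (m - 1) := by
    rw [show ((X : PowerSeries ℂ) ^ m) = C 1 * X ^ m by rw [map_one, one_mul],
      deriv_C_X_pow, one_mul]
  have hx2 : (C (m : ℂ) * X ^ (m - 1)).derivativeFun
      = C ((m : ℂ) * ((m - 1 : ℕ) : ℂ)) * X ^ (m - 2) := by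
    rw [deriv_C_X_pow, show m - 1 - 1 = m - 2 from by omega]
  have hx3 : (C ((m : ℂ) * ((m - 1 : ℕ) : ℂ)) * X ^ (m - 2)).derivativeFun
      = C ((m : ℂ) * (((m - 1 : ℕ) : ℂ) * ((m - 2 : ℕ) : ℂ))) * X ^ (m - 3) := by
    rw [deriv_C_X_pow, show m - 2 - 1 = m - 3 from by omega, mul_assoc]
  -- coefficients of y derivatives at the key spots
  have hc1 : ((n - 1 : ℕ) : ℂ) + 1 = (n : ℂ) := by
    exact_mod_cast congrArg (Nat.cast : ℕ → ℂ) (show n - 1 + 1 = n from by omega)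
  have hc2 : ((n - 2 : ℕ) : ℂ) + 1 = ((n - 1 : ℕ) : ℂ) := by
    exact_mod_cast congrArg (Nat.cast : ℕ → ℂ) (show n - 2 + 1 = n - 1 from by omega)
  have hc3 : ((n - 3 : ℕ) : ℂ) + 1 = ((n - 2 : ℕ) : ℂ) := by
    exact_mod_cast congrArg (Nat.cast : ℕ → ℂ) (show n - 3 + 1 = n - 2 from by omega)
  have hcy1 : coeff (n - 1) y1 = a * n := by
    rw [hy1, coeff_derivativeFun', show n - 1 + 1 = n from by omega, hyn, hc1]
  have hcy2 : coeff (n - 2) y2 = a * n * ((n - 1 : ℕ) : ℂ) := by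
    rw [hy2, hy1, coeff_derivativeFun', coeff_derivativeFun',
      show n - 2 + 1 + 1 = n from by omega, show n - 2 + 1 = n - 1 from by omega, hyn,
      hc1, hc2]
  have hcy3 : coeff (n - 3) y3 = a * n * ((n - 1 : ℕ) : ℂ) * ((n - 2 : ℕ) : ℂ) := by
    rw [hy3, hy2, hy1, coeff_derivativeFun', coeff_derivativeFun', coeff_derivativeFun',
      show n - 3 + 1 + 1 + 1 = n from by omega, show n - 3 + 1 + 1 = n - 1 from by omega,
      show n - 3 + 1 = n - 2 from by omega, hyn, hc1, hc2, hc3]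
  -- order lower bounds for y derivatives
  have hoy1 : ((n - 1 : ℕ) : ℕ∞) ≤ y1.order := by
    refine nat_le_order _ _ fun i hi => ?_
    rw [hy1, coeff_derivativeFun', hylow (i + 1) (by omega), zero_mul]
  have hoy2 : ((n - 2 : ℕ) : ℕ∞) ≤ y2.order := by
    refine nat_le_order _ _ fun i hi => ?_
    rw [hy2, hy1, coeff_derivativeFun', coeff_derivativeFun',
      hylow (i + 1 + 1) (by omega), zero_mul, zero_mul]
  have hoy3 : ((n - 3 : ℕ) : ℕ∞) ≤ y3.order := by
    refine nat_le_order _ _ fun i hi => ?_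
    rw [hy3, hy2, hy1, coeff_derivativeFun', coeff_derivativeFun', coeff_derivativeFun',
      hylow (i + 1 + 1 + 1) (by omega), zero_mul, zero_mul, zero_mul]
  -- the eight-term expansion
  have hv : ((((X : PowerSeries ℂ) ^ m).derivativeFun ^ 2 + y1 ^ 2) *
        (((X : PowerSeries ℂ) ^ m).derivativeFun * y3 -
          ((X : PowerSeries ℂ) ^ m).derivativeFun.derivativeFun.derivativeFun * y1) +
      3 * (((X : PowerSeries ℂ) ^ m).derivativeFun *
            ((X : PowerSeries ℂ) ^ m).derivativeFun.derivativeFun + y1 * y2) *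
        (((X : PowerSeries ℂ) ^ m).derivativeFun.derivativeFun * y1 -
          ((X : PowerSeries ℂ) ^ m).derivativeFun * y2))
      = C ((m : ℂ) ^ 3) * (X ^ (3 * (m - 1)) * y3)
        - C ((m : ℂ) ^ 2 * ((m : ℂ) * (((m - 1 : ℕ) : ℂ) * ((m - 2 : ℕ) : ℂ)))) *
            (X ^ (2 * (m - 1) + (m - 3)) * y1)
        + C (3 * ((m : ℂ) * ((m : ℂ) * ((m - 1 : ℕ) : ℂ)) ^ 2)) *
            (X ^ ((m - 1) + 2 * (m - 2)) * y1)
        - C (3 * ((m : ℂ) ^ 2 * ((m : ℂ) * ((m - 1 : ℕ) : ℂ)))) *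
            (X ^ (2 * (m - 1) + (m - 2)) * y2)
        + C (m : ℂ) * (X ^ (m - 1) * (y1 * y1 * y3))
        - C ((m : ℂ) * (((m - 1 : ℕ) : ℂ) * ((m - 2 : ℕ) : ℂ))) *
            (X ^ (m - 3) * (y1 * y1 * y1))
        + C (3 * ((m : ℂ) * ((m - 1 : ℕ) : ℂ))) * (X ^ (m - 2) * (y1 * y1 * y2))
        - C (3 * (m : ℂ)) * (X ^ (m - 1) * (y1 * y2 * y2)) := by
    rw [hx1, hx2, hx3]
    simp only [map_pow, map_mul, map_ofNat]
    ring
  -- order lower bounds for each term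
  -- order lower bounds for each of the eight terms
  have h1 : ((k : ℕ) : ℕ∞) ≤ (C ((m : ℂ) ^ 3) * (X ^ (3 * (m - 1)) * y3)).order :=
    le_trans (by exact_mod_cast (show k ≤ 3 * (m - 1) + (n - 3) from by omega) : _)
      (ordterm _ _ hoy3)
  have h2 : ((k : ℕ) : ℕ∞) ≤ (C ((m : ℂ) ^ 2 * ((m : ℂ) * (((m - 1 : ℕ) : ℂ) * ((m - 2 : ℕ) : ℂ)))) *
      (X ^ (2 * (m - 1) + (m - 3)) * y1)).order :=
    le_trans (by exact_mod_cast (show k ≤ (2 * (m - 1) + (m - 3)) + (n - 1) from by omega) : _)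
      (ordterm _ _ hoy1)
  have h3 : ((k : ℕ) : ℕ∞) ≤ (C (3 * ((m : ℂ) * ((m : ℂ) * ((m - 1 : ℕ) : ℂ)) ^ 2)) *
      (X ^ ((m - 1) + 2 * (m - 2)) * y1)).order :=
    le_trans (by exact_mod_cast (show k ≤ ((m - 1) + 2 * (m - 2)) + (n - 1) from by omega) : _)
      (ordterm _ _ hoy1)
  have h4 : ((k : ℕ) : ℕ∞) ≤ (C (3 * ((m : ℂ) ^ 2 * ((m : ℂ) * ((m - 1 : ℕ) : ℂ)))) *
      (X ^ (2 * (m - 1) + (m - 2)) * y2)).order :=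
    le_trans (by exact_mod_cast (show k ≤ (2 * (m - 1) + (m - 2)) + (n - 2) from by omega) : _)
      (ordterm _ _ hoy2)
  have h5 : ((k + 1 : ℕ) : ℕ∞) ≤ (C (m : ℂ) * (X ^ (m - 1) * (y1 * y1 * y3))).order :=
    le_trans (by exact_mod_cast (show k + 1 ≤ (m - 1) + ((n - 1) + (n - 1) + (n - 3)) from by omega) : _)
      (ordterm _ _ (ord2 (ord2 hoy1 hoy1) hoy3))
  have h6 : ((k + 1 : ℕ) : ℕ∞) ≤ (C ((m : ℂ) * (((m - 1 : ℕ) : ℂ) * ((m - 2 : ℕ) : ℂ))) *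
      (X ^ (m - 3) * (y1 * y1 * y1))).order :=
    le_trans (by exact_mod_cast (show k + 1 ≤ (m - 3) + ((n - 1) + (n - 1) + (n - 1)) from by omega) : _)
      (ordterm _ _ (ord2 (ord2 hoy1 hoy1) hoy1))
  have h7 : ((k + 1 : ℕ) : ℕ∞) ≤ (C (3 * ((m : ℂ) * ((m - 1 : ℕ) : ℂ))) *
      (X ^ (m - 2) * (y1 * y1 * y2))).order :=
    le_trans (by exact_mod_cast (show k + 1 ≤ (m - 2) + ((n - 1) + (n - 1) + (n - 2)) from by omega) : _)
      (ordterm _ _ (ord2 (ord2 hoy1 hoy1) hoy2))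
  have h8 : ((k + 1 : ℕ) : ℕ∞) ≤ (C (3 * (m : ℂ)) * (X ^ (m - 1) * (y1 * y2 * y2))).order :=
    le_trans (by exact_mod_cast (show k + 1 ≤ (m - 1) + ((n - 1) + (n - 2) + (n - 2)) from by omega) : _)
      (ordterm _ _ (ord2 (ord2 hoy1 hoy2) hoy2))
  have hkk : ((k : ℕ) : ℕ∞) ≤ ((k + 1 : ℕ) : ℕ∞) := by exact_mod_cast Nat.le_succ k
  rw [hv]
  rw [order_eq_nat]
  constructor
  · -- the coefficient at k is nonzero
    have hlt : ((k : ℕ) : ℕ∞) < ((k + 1 : ℕ) : ℕ∞) := by exact_mod_cast Nat.lt_succ_self k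
    have ht1 : coeff k (C ((m : ℂ) ^ 3) * (X ^ (3 * (m - 1)) * y3))
        = (m : ℂ) ^ 3 * (a * n * ((n - 1 : ℕ) : ℂ) * ((n - 2 : ℕ) : ℂ)) := by
      rw [ct, if_pos (show 3 * (m - 1) ≤ k from by omega),
        show k - 3 * (m - 1) = n - 3 from by omega, hcy3]
    have ht2 : coeff k (C ((m : ℂ) ^ 2 * ((m : ℂ) * (((m - 1 : ℕ) : ℂ) * ((m - 2 : ℕ) : ℂ)))) *
          (X ^ (2 * (m - 1) + (m - 3)) * y1))
        = (m : ℂ) ^ 2 * ((m : ℂ) * (((m - 1 : ℕ) : ℂ) * ((m - 2 : ℕ) : ℂ))) * (a * n) := by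
      rcases le_or_gt 3 m with h | h
      · rw [ct, if_pos (show 2 * (m - 1) + (m - 3) ≤ k from by omega),
          show k - (2 * (m - 1) + (m - 3)) = n - 1 from by omega, hcy1]
      · have hz : ((m - 2 : ℕ) : ℂ) = 0 := by
          rw [show m - 2 = 0 from by omega]; norm_num
        rw [ct, hz]
        split_ifs <;> ring
    have ht3 : coeff k (C (3 * ((m : ℂ) * ((m : ℂ) * ((m - 1 : ℕ) : ℂ)) ^ 2)) *
          (X ^ ((m - 1) + 2 * (m - 2)) * y1))
        = 3 * ((m : ℂ) * ((m : ℂ) * ((m - 1 : ℕ) : ℂ)) ^ 2) * (a * n) := by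
      rcases le_or_gt 2 m with h | h
      · rw [ct, if_pos (show (m - 1) + 2 * (m - 2) ≤ k from by omega),
          show k - ((m - 1) + 2 * (m - 2)) = n - 1 from by omega, hcy1]
      · have hz : ((m - 1 : ℕ) : ℂ) = 0 := by
          rw [show m - 1 = 0 from by omega]; norm_num
        rw [ct, hz]
        split_ifs <;> ring
    have ht4 : coeff k (C (3 * ((m : ℂ) ^ 2 * ((m : ℂ) * ((m - 1 : ℕ) : ℂ)))) *
          (X ^ (2 * (m - 1) + (m - 2)) * y2))
        = 3 * ((m : ℂ) ^ 2 * ((m : ℂ) * ((m - 1 : ℕ) : ℂ))) * (a * n * ((n - 1 : ℕ) : ℂ)) := by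
      rcases le_or_gt 2 m with h | h
      · rw [ct, if_pos (show 2 * (m - 1) + (m - 2) ≤ k from by omega),
          show k - (2 * (m - 1) + (m - 2)) = n - 2 from by omega, hcy2]
      · have hz : ((m - 1 : ℕ) : ℂ) = 0 := by
          rw [show m - 1 = 0 from by omega]; norm_num
        rw [ct, hz]
        split_ifs <;> ring
    have ht5 : coeff k (C (m : ℂ) * (X ^ (m - 1) * (y1 * y1 * y3))) = 0 :=
      coeff_of_lt_order k (lt_of_lt_of_le hlt h5)
    have ht6 : coeff k (C ((m : ℂ) * (((m - 1 : ℕ) : ℂ) * ((m - 2 : ℕ) : ℂ))) *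
        (X ^ (m - 3) * (y1 * y1 * y1))) = 0 :=
      coeff_of_lt_order k (lt_of_lt_of_le hlt h6)
    have ht7 : coeff k (C (3 * ((m : ℂ) * ((m - 1 : ℕ) : ℂ))) *
        (X ^ (m - 2) * (y1 * y1 * y2))) = 0 :=
      coeff_of_lt_order k (lt_of_lt_of_le hlt h7)
    have ht8 : coeff k (C (3 * (m : ℂ)) * (X ^ (m - 1) * (y1 * y2 * y2))) = 0 :=
      coeff_of_lt_order k (lt_of_lt_of_le hlt h8)
    simp only [map_sub, map_add, ht1, ht2, ht3, ht4, ht5, ht6, ht7, ht8, add_zero, sub_zero]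
    have hm12 : ((m - 1 : ℕ) : ℂ) * ((m - 2 : ℕ) : ℂ) = ((m : ℂ) - 1) * ((m : ℂ) - 2) := by
      rcases le_or_gt 2 m with h | h
      · rw [Nat.cast_sub hm, Nat.cast_sub h]; push_cast; ring
      · have h1 : m = 1 := by omega
        subst h1; norm_num
    have hm1 : ((m - 1 : ℕ) : ℂ) = (m : ℂ) - 1 := by
      rw [Nat.cast_sub hm, Nat.cast_one]
    have hn1 : ((n - 1 : ℕ) : ℂ) = (n : ℂ) - 1 := by
      rw [Nat.cast_sub (by omega : 1 ≤ n), Nat.cast_one]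
    have hn2 : ((n - 2 : ℕ) : ℂ) = (n : ℂ) - 2 := by
      rw [Nat.cast_sub (by omega : 2 ≤ n)]; norm_num
    rw [hm12, hm1, hn1, hn2]
    refine ne_of_eq_of_ne
      (by ring : _ = a * ((m : ℂ) ^ 3 * (n : ℂ) * ((n : ℂ) - (m : ℂ)) * ((n : ℂ) - 2 * (m : ℂ)))) ?_
    refine mul_ne_zero ha (mul_ne_zero (mul_ne_zero (mul_ne_zero
      (pow_ne_zero 3 (Nat.cast_ne_zero.mpr (by omega)))
      (Nat.cast_ne_zero.mpr (by omega)))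
      (sub_ne_zero.mpr (by exact_mod_cast (show n ≠ m from by omega))))
      (sub_ne_zero.mpr (by exact_mod_cast hn2m)))
  · -- all lower coefficients vanish
    intro i hi
    have hord := ordsub (ordadd (ordsub (ordadd (ordsub (ordadd (ordsub h1 h2) h3) h4)
      (le_trans hkk h5)) (le_trans hkk h6)) (le_trans hkk h7)) (le_trans hkk h8)
    exact coeff_of_lt_order i (lt_of_lt_of_le (by exact_mod_cast hi) hord)
end

section
/- Let f, g, h : (ℂ²,0) → (ℂ,0) be germs of holomorphic functions (or formal power series in two variables) with f = g·h. Then i_f = g³ i_h + h³ i_g + g·h·r for some power series r, where i_f = f_y² f_xx − 2 f_x f_y f_xy + f_x² f_yy. -/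
/-- Formal partial derivative of a two-variable power series with respect to the
`i`-th variable. -/
noncomputable def pd (i : Fin 2) (f : MvPowerSeries (Fin 2) ℂ) : MvPowerSeries (Fin 2) ℂ :=
  fun e => (e i + 1 : ℂ) * f (e + Finsupp.single i 1)

lemma coeff_pd (i : Fin 2) (f : MvPowerSeries (Fin 2) ℂ) (e : Fin 2 →₀ ℕ) :
    MvPowerSeries.coeff e (pd i f) =
      (e i + 1 : ℂ) * MvPowerSeries.coeff (e + Finsupp.single i 1) f := rfl

lemma pd_add (i : Fin 2) (f g : MvPowerSeries (Fin 2) ℂ) :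
    pd i (f + g) = pd i f + pd i g := by
  funext e
  show (e i + 1 : ℂ) * (f _ + g _) = (e i + 1 : ℂ) * f _ + (e i + 1 : ℂ) * g _
  ring

open Finsupp in
lemma pd_sum_left (i : Fin 2) (e : Fin 2 →₀ ℕ) (F : (Fin 2 →₀ ℕ) → (Fin 2 →₀ ℕ) → ℂ) :
    ∑ p ∈ Finset.HasAntidiagonal.antidiagonal (e + single i 1),
        (((p.1 : Fin 2 →₀ ℕ) i : ℂ) * F p.1 p.2)
      = ∑ p ∈ Finset.HasAntidiagonal.antidiagonal e,
          (((p.1 : Fin 2 →₀ ℕ) i : ℂ) + 1) * F (p.1 + single i 1) p.2 := by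
  rw [← Finset.sum_filter_of_ne (p := fun p => (p.1 : Fin 2 →₀ ℕ) i ≠ 0)
      (by intro x hx hne h0; rw [h0] at hne; simp at hne)]
  refine Finset.sum_bij' (fun p _ => (p.1 - single i 1, p.2))
    (fun q _ => (q.1 + single i 1, q.2)) ?_ ?_ ?_ ?_ ?_
  · rintro ⟨a, b⟩ hp
    simp only [Finset.mem_filter, Finset.HasAntidiagonal.mem_antidiagonal] at hp ⊢
    obtain ⟨hab, hne⟩ := hp
    have hle : single i 1 ≤ a := single_le_iff.mpr (Nat.one_le_iff_ne_zero.mpr hne)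
    have h2 : (a - single i 1 + b) + single i 1 = e + single i 1 := by
      rw [add_right_comm, tsub_add_cancel_of_le hle, hab]
    exact add_right_cancel h2
  · rintro ⟨a, b⟩ hq
    simp only [Finset.mem_filter, Finset.HasAntidiagonal.mem_antidiagonal] at hq ⊢
    constructor
    · rw [add_right_comm, hq]
    · simp
  · rintro ⟨a, b⟩ hp
    simp only [Finset.mem_filter, Finset.HasAntidiagonal.mem_antidiagonal] at hp
    have hle : single i 1 ≤ a := single_le_iff.mpr (Nat.one_le_iff_ne_zero.mpr hp.2)
    simp [tsub_add_cancel_of_le hle]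
  · rintro ⟨a, b⟩ hq
    simp
  · rintro ⟨a, b⟩ hp
    simp only [Finset.mem_filter, Finset.HasAntidiagonal.mem_antidiagonal] at hp
    have hle : single i 1 ≤ a := single_le_iff.mpr (Nat.one_le_iff_ne_zero.mpr hp.2)
    have h1 : 1 ≤ a i := Nat.one_le_iff_ne_zero.mpr hp.2
    have harg : (a - single i 1) + single i 1 = a := tsub_add_cancel_of_le hle
    show ((a i : ℂ)) * F a b = _
    rw [harg, Finsupp.coe_tsub, Pi.sub_apply, Finsupp.single_eq_same,
      Nat.cast_sub h1, Nat.cast_one]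
    ring

open Finsupp in
lemma sum_antidiag_swap (n : Fin 2 →₀ ℕ) (G : (Fin 2 →₀ ℕ) → (Fin 2 →₀ ℕ) → ℂ) :
    ∑ p ∈ Finset.HasAntidiagonal.antidiagonal n, G p.1 p.2 = ∑ p ∈ Finset.HasAntidiagonal.antidiagonal n, G p.2 p.1 := by
  conv_lhs => rw [← Finset.HasAntidiagonal.map_swap_antidiagonal]
  rw [Finset.sum_map]
  rfl

open Finsupp in
lemma pd_sum_right (i : Fin 2) (e : Fin 2 →₀ ℕ) (F : (Fin 2 →₀ ℕ) → (Fin 2 →₀ ℕ) → ℂ) :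
    ∑ p ∈ Finset.HasAntidiagonal.antidiagonal (e + single i 1),
        (((p.2 : Fin 2 →₀ ℕ) i : ℂ) * F p.1 p.2)
      = ∑ p ∈ Finset.HasAntidiagonal.antidiagonal e,
          (((p.2 : Fin 2 →₀ ℕ) i : ℂ) + 1) * F p.1 (p.2 + single i 1) := by
  calc ∑ p ∈ Finset.HasAntidiagonal.antidiagonal (e + single i 1),
          (((p.2 : Fin 2 →₀ ℕ) i : ℂ) * F p.1 p.2)
      = ∑ p ∈ Finset.HasAntidiagonal.antidiagonal (e + single i 1),
          (((p.1 : Fin 2 →₀ ℕ) i : ℂ) * F p.2 p.1) :=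
        sum_antidiag_swap _ (fun a b => ((b : Fin 2 →₀ ℕ) i : ℂ) * F a b)
    _ = ∑ p ∈ Finset.HasAntidiagonal.antidiagonal e,
          (((p.1 : Fin 2 →₀ ℕ) i : ℂ) + 1) * F p.2 (p.1 + single i 1) :=
        pd_sum_left i e (fun a b => F b a)
    _ = ∑ p ∈ Finset.HasAntidiagonal.antidiagonal e,
          (((p.2 : Fin 2 →₀ ℕ) i : ℂ) + 1) * F p.1 (p.2 + single i 1) :=
        sum_antidiag_swap _ (fun a b => (((a : Fin 2 →₀ ℕ) i : ℂ) + 1) * F b (a + single i 1))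

open Finsupp in
/-- Leibniz rule for the formal partial derivative `pd`. -/
lemma pd_mul (i : Fin 2) (g h : MvPowerSeries (Fin 2) ℂ) :
    pd i (g * h) = pd i g * h + g * pd i h := by
  ext e
  rw [map_add, coeff_pd, MvPowerSeries.coeff_mul, MvPowerSeries.coeff_mul,
    MvPowerSeries.coeff_mul, Finset.mul_sum]
  have step : ∀ p ∈ Finset.HasAntidiagonal.antidiagonal (e + single i 1),
      (e i + 1 : ℂ) * (MvPowerSeries.coeff p.1 g * MvPowerSeries.coeff p.2 h)
        = ((p.1 : Fin 2 →₀ ℕ) i : ℂ) * (MvPowerSeries.coeff p.1 g * MvPowerSeries.coeff p.2 h)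
          + ((p.2 : Fin 2 →₀ ℕ) i : ℂ) * (MvPowerSeries.coeff p.1 g * MvPowerSeries.coeff p.2 h) := by
    rintro ⟨a, b⟩ hp
    rw [Finset.HasAntidiagonal.mem_antidiagonal] at hp
    have : a i + b i = e i + 1 := by
      have := DFunLike.congr_fun hp i
      simpa using this
    have : (a i : ℂ) + (b i : ℂ) = (e i : ℂ) + 1 := by exact_mod_cast this
    rw [← this]; ring
  rw [Finset.sum_congr rfl step, Finset.sum_add_distrib,
    pd_sum_left i e (fun a b => MvPowerSeries.coeff a g * MvPowerSeries.coeff b h),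
    pd_sum_right i e (fun a b => MvPowerSeries.coeff a g * MvPowerSeries.coeff b h)]
  congr 1 <;> refine Finset.sum_congr rfl fun p _ => ?_ <;> rw [coeff_pd] <;> ring

/-- `i_f = f_y² f_xx - 2 f_x f_y f_xy + f_x² f_yy`. -/
noncomputable def iInv (f : MvPowerSeries (Fin 2) ℂ) : MvPowerSeries (Fin 2) ℂ :=
  (pd 1 f) ^ 2 * pd 0 (pd 0 f) - 2 * pd 0 f * pd 1 f * pd 0 (pd 1 f) +
    (pd 0 f) ^ 2 * pd 1 (pd 1 f)

/-- If `f = g·h` then `i_f = g³ i_h + h³ i_g + g·h·r` for some power series `r`. -/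
theorem iInv_mul (f g h : MvPowerSeries (Fin 2) ℂ) (hf : f = g * h) :
    ∃ r : MvPowerSeries (Fin 2) ℂ,
      iInv f = g ^ 3 * iInv h + h ^ 3 * iInv g + g * h * r := by
  subst hf
  refine ⟨-2 * (pd 1 g)^2 * (pd 0 h)^2 + 4 * (pd 0 g) * (pd 1 g) * (pd 0 h) * (pd 1 h)
      - 2 * (pd 0 g)^2 * (pd 1 h)^2
      + h * (-2 * (pd 1 g) * (pd 0 (pd 1 g)) * (pd 0 h)
          + 2 * (pd 1 g) * (pd 0 (pd 0 g)) * (pd 1 h)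
          + (pd 1 g)^2 * (pd 0 (pd 0 h))
          + 2 * (pd 0 g) * (pd 1 (pd 1 g)) * (pd 0 h)
          - 2 * (pd 0 g) * (pd 0 (pd 1 g)) * (pd 1 h)
          - 2 * (pd 0 g) * (pd 1 g) * (pd 0 (pd 1 h))
          + (pd 0 g)^2 * (pd 1 (pd 1 h)))
      + g * ((pd 1 (pd 1 g)) * (pd 0 h)^2
          - 2 * (pd 0 (pd 1 g)) * (pd 0 h) * (pd 1 h)
          + (pd 0 (pd 0 g)) * (pd 1 h)^2
          + 2 * (pd 1 g) * (pd 1 h) * (pd 0 (pd 0 h))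
          - 2 * (pd 1 g) * (pd 0 h) * (pd 0 (pd 1 h))
          - 2 * (pd 0 g) * (pd 1 h) * (pd 0 (pd 1 h))
          + 2 * (pd 0 g) * (pd 0 h) * (pd 1 (pd 1 h))), ?_⟩
  simp only [iInv, pd_mul, pd_add]
  ring
end

section
/- For formal power series f, g, h in two variables over ℂ, the intersection number is additive in products: m(f, g·h) = m(f, g) + m(f, h), where all quantities are interpreted in ℕ ∪ {∞}. -/
set_option synthInstance.maxHeartbeats 1000000

/-- The intersection number `m(f,g) = dim_ℂ ℂ⟦x,y⟧/(f,g)`, valued in `ℕ ∪ {∞}`. -/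
noncomputable def interNum (f g : MvPowerSeries (Fin 2) ℂ) : ℕ∞ :=
  (Module.rank ℂ (MvPowerSeries (Fin 2) ℂ ⧸ Ideal.span {f, g})).toENat

set_option maxHeartbeats 1000000

noncomputable section InterNumAux

open MvPowerSeries

/-- Abbreviation for the base ring. -/
abbrev R2 := MvPowerSeries (Fin 2) ℂ

lemma coeff_mul_X_pow' (a : R2) (t : Fin 2) (l : ℕ) (m : Fin 2 →₀ ℕ) :
    MvPowerSeries.coeff (m + Finsupp.single t l) (a * (MvPowerSeries.X t : R2) ^ l)
      = MvPowerSeries.coeff m a := by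
  classical
  rw [MvPowerSeries.coeff_mul]
  rw [Finset.sum_eq_single (m, Finsupp.single t l)]
  · rw [MvPowerSeries.coeff_X_pow, if_pos rfl, mul_one]
  · rintro ⟨u, v⟩ huv hne
    rw [Finset.HasAntidiagonal.mem_antidiagonal] at huv
    rw [MvPowerSeries.coeff_X_pow]
    rcases eq_or_ne v (Finsupp.single t l) with rfl | hv
    · obtain rfl : u = m := add_right_cancel huv
      exact absurd rfl hne
    · rw [if_neg hv, mul_zero]
  · intro hmem
    simp [Finset.HasAntidiagonal.mem_antidiagonal] at hmem

lemma Xne (s : Fin 2) : (MvPowerSeries.X s : R2) ≠ 0 := by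
  classical
  intro h
  have := congrArg (MvPowerSeries.coeff (Finsupp.single s 1)) h
  simp [MvPowerSeries.coeff_X] at this

lemma X_pow_dvd_of_mul {s t : Fin 2} (hst : s ≠ t) (a b : R2) (k l : ℕ)
    (hab : a * (MvPowerSeries.X t) ^ l = b * (MvPowerSeries.X s) ^ k) :
    (MvPowerSeries.X s : R2) ^ k ∣ a := by
  rw [MvPowerSeries.X_pow_dvd_iff]
  intro m hm
  have h1 : (MvPowerSeries.X s : R2) ^ k ∣ b * (MvPowerSeries.X s) ^ k :=
    dvd_mul_left _ _
  have h2 := MvPowerSeries.X_pow_dvd_iff.1 h1 (m + Finsupp.single t l) ?_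
  · rw [← hab, coeff_mul_X_pow'] at h2
    exact h2
  · simpa [Finsupp.single_apply, hst.symm] using hm

lemma dvd_of_dvd_mul_pows {f z : R2} {k l : ℕ}
    (h1 : f ∣ z * (MvPowerSeries.X 0) ^ k) (h2 : f ∣ z * (MvPowerSeries.X 1) ^ l) :
    f ∣ z := by
  rcases eq_or_ne f 0 with rfl | hf
  · rw [zero_dvd_iff] at h1 ⊢
    rcases mul_eq_zero.1 h1 with hz | hX
    · exact hz
    · exact absurd hX (pow_ne_zero _ (Xne 0))
  obtain ⟨a, ha⟩ := h1
  obtain ⟨b, hb⟩ := h2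
  have key : a * (MvPowerSeries.X 1) ^ l = b * (MvPowerSeries.X 0) ^ k := by
    have : f * (a * (MvPowerSeries.X 1) ^ l) = f * (b * (MvPowerSeries.X 0) ^ k) := by
      rw [← mul_assoc, ← ha, ← mul_assoc, ← hb]; ring
    exact mul_left_cancel₀ hf this
  obtain ⟨a', ha'⟩ := X_pow_dvd_of_mul (by decide : (0 : Fin 2) ≠ 1) a b k l key
  have hzz : z * (MvPowerSeries.X 0) ^ k = f * a' * (MvPowerSeries.X 0) ^ k := by
    rw [ha, ha']; ring
  have := mul_right_cancel₀ (pow_ne_zero k (Xne 0)) hzz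
  exact ⟨a', this⟩

lemma pow_X_mem_of_rank_lt (I : Ideal R2) (s : Fin 2)
    (h : Module.rank ℂ (R2 ⧸ I) < Cardinal.aleph0) :
    ∃ k : ℕ, (MvPowerSeries.X s : R2) ^ k ∈ I := by
  classical
  have hnli : ¬ LinearIndependent ℂ
      (fun n : ℕ => (Ideal.Quotient.mkₐ ℂ I ((MvPowerSeries.X s : R2) ^ n))) := by
    intro hli
    exact absurd hli.aleph0_le_rank (not_le.2 h)
  obtain ⟨t, c, hsum, n₀, hn₀t, hn₀⟩ := not_linearIndependent_iff.1 hnli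
  set t' := t.filter fun n => c n ≠ 0 with ht'
  have hn₀t' : n₀ ∈ t' := Finset.mem_filter.2 ⟨hn₀t, hn₀⟩
  have ht'ne : t'.Nonempty := ⟨n₀, hn₀t'⟩
  set a := t'.min' ht'ne with ha
  have haLe : ∀ n ∈ t', a ≤ n := fun n hn => Finset.min'_le t' n hn
  have hat' : a ∈ t' := t'.min'_mem ht'ne
  set p : R2 := ∑ n ∈ t', c n • (MvPowerSeries.X s : R2) ^ n with hp
  have hpI : p ∈ I := by
    rw [← Ideal.Quotient.eq_zero_iff_mem]
    have : (Ideal.Quotient.mk I) p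
        = ∑ n ∈ t', c n • (Ideal.Quotient.mkₐ ℂ I ((MvPowerSeries.X s : R2) ^ n)) := by
      rw [hp, ← Ideal.Quotient.mkₐ_eq_mk ℂ, map_sum]
      exact Finset.sum_congr rfl fun n _ => map_smul _ _ _
    rw [this, ← hsum, ht']
    exact Finset.sum_filter_of_ne fun n _ hne hc => hne (by rw [hc, zero_smul])
  set u : R2 := ∑ n ∈ t', c n • (MvPowerSeries.X s : R2) ^ (n - a) with hu
  have hXu : p = (MvPowerSeries.X s : R2) ^ a * u := by
    rw [hu, hp, Finset.mul_sum]
    refine Finset.sum_congr rfl fun n hn => ?_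
    rw [mul_smul_comm, ← pow_add, Nat.add_sub_cancel' (haLe n hn)]
  have hcu : MvPowerSeries.constantCoeff u = c a := by
    rw [hu, map_sum]
    rw [Finset.sum_eq_single a]
    · rw [MvPowerSeries.smul_eq_C_mul, Nat.sub_self, pow_zero, mul_one,
        MvPowerSeries.constantCoeff_C]
    · intro n hn hne
      have h1 : 0 < n - a := Nat.sub_pos_of_lt (lt_of_le_of_ne (haLe n hn) (Ne.symm hne))
      rw [MvPowerSeries.smul_eq_C_mul, map_mul, map_pow, MvPowerSeries.constantCoeff_X,
        zero_pow h1.ne', mul_zero]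
    · intro hne
      exact absurd hat' hne
  have hca : c a ≠ 0 := (Finset.mem_filter.1 hat').2
  have huu : IsUnit u := by
    rw [MvPowerSeries.isUnit_iff_constantCoeff, hcu]
    exact isUnit_iff_ne_zero.2 hca
  obtain ⟨v, hv⟩ := huu
  refine ⟨a, ?_⟩
  have : (MvPowerSeries.X s : R2) ^ a = p * ↑v⁻¹ := by
    rw [hXu, ← hv, mul_assoc, Units.mul_inv, mul_one]
  rw [this]
  exact I.mul_mem_right _ hpI

lemma dvd_of_pows_mem {f g : R2} {k l : ℕ}
    (hx : (MvPowerSeries.X 0 : R2) ^ k ∈ Ideal.span {f, g})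
    (hy : (MvPowerSeries.X 1 : R2) ^ l ∈ Ideal.span {f, g})
    {z : R2} (hz : f ∣ g * z) : f ∣ z := by
  obtain ⟨A, B, hAB⟩ := Ideal.mem_span_pair.1 hx
  obtain ⟨C, D, hCD⟩ := Ideal.mem_span_pair.1 hy
  obtain ⟨w, hw⟩ := hz
  have d1 : f ∣ z * (MvPowerSeries.X 0 : R2) ^ k :=
    ⟨z * A + B * w, by linear_combination z * hAB.symm + B * hw⟩
  have d2 : f ∣ z * (MvPowerSeries.X 1 : R2) ^ l :=
    ⟨z * C + D * w, by linear_combination z * hCD.symm + D * hw⟩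
  exact dvd_of_dvd_mul_pows d1 d2

lemma rank_infinite_of_not_P {f g : R2} (z : R2)
    (h1 : f ∣ g * z) (h2 : ¬ f ∣ z) :
    Cardinal.aleph0 ≤ Module.rank ℂ (R2 ⧸ Ideal.span {f, g}) := by
  by_contra hlt
  push_neg at hlt
  obtain ⟨k, hk⟩ := pow_X_mem_of_rank_lt _ 0 hlt
  obtain ⟨l, hl⟩ := pow_X_mem_of_rank_lt _ 1 hlt
  exact h2 (dvd_of_pows_mem hk hl h1)

lemma rank_add (f g h : R2) (hP : ∀ z, f ∣ g * z → f ∣ z) :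
    Module.rank ℂ (R2 ⧸ Ideal.span {f, g * h}) =
      Module.rank ℂ (R2 ⧸ Ideal.span {f, g}) + Module.rank ℂ (R2 ⧸ Ideal.span {f, h}) := by
  set I1 : Ideal R2 := Ideal.span {f, g} with hI1
  set I2 : Ideal R2 := Ideal.span {f, g * h} with hI2
  set I3 : Ideal R2 := Ideal.span {f, h} with hI3
  have hfI1 : f ∈ I1 := Ideal.subset_span (by simp)
  have hgI1 : g ∈ I1 := Ideal.subset_span (by simp)
  -- the projection π : R2⧸I2 → R2⧸I1
  have hle : ∀ x, x ∈ I2 → x ∈ I1 := by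
    intro x hx
    rw [hI2, Ideal.mem_span_pair] at hx
    obtain ⟨a, b, rfl⟩ := hx
    exact I1.add_mem (I1.mul_mem_left a hfI1) (by
      have : b * (g * h) = (b * h) * g := by ring
      rw [this]; exact I1.mul_mem_left _ hgI1)
  set π : (R2 ⧸ I2) →ₗ[R2] (R2 ⧸ I1) :=
    Submodule.mapQ (I2 : Submodule R2 R2) (I1 : Submodule R2 R2) LinearMap.id hle with hπ
  -- the multiplication-by-g map μ : R2⧸I3 → R2⧸I2
  have hμc : ∀ z : R2, z ∈ I3 → (LinearMap.toSpanSingleton R2 R2 g) z ∈ I2 := by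
    intro z hz
    rw [hI3, Ideal.mem_span_pair] at hz
    obtain ⟨a, b, rfl⟩ := hz
    show ((a * f + b * h) • g) ∈ I2
    rw [smul_eq_mul, hI2, Ideal.mem_span_pair]
    exact ⟨a * g, b, by ring⟩
  set μ : (R2 ⧸ I3) →ₗ[R2] (R2 ⧸ I2) :=
    Submodule.mapQ (I3 : Submodule R2 R2) (I2 : Submodule R2 R2)
      (LinearMap.toSpanSingleton R2 R2 g) hμc with hμ
  have hπs : Function.Surjective π := by
    intro y
    obtain ⟨w, rfl⟩ := Submodule.Quotient.mk_surjective (I1 : Submodule R2 R2) y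
    exact ⟨Submodule.Quotient.mk w, by rw [hπ, Submodule.mapQ_apply]; rfl⟩
  have hμinj : Function.Injective μ := by
    rw [← LinearMap.ker_eq_bot, eq_bot_iff]
    intro x hx
    obtain ⟨z, rfl⟩ := Submodule.Quotient.mk_surjective (I3 : Submodule R2 R2) x
    rw [LinearMap.mem_ker, hμ, Submodule.mapQ_apply, Submodule.Quotient.mk_eq_zero] at hx
    have hx' : z * g ∈ I2 := by rwa [LinearMap.toSpanSingleton_apply, smul_eq_mul] at hx
    rw [hI2, Ideal.mem_span_pair] at hx'
    obtain ⟨a, b, hab⟩ := hx'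
    have hdvd : f ∣ g * (z - b * h) := ⟨a, by linear_combination -hab⟩
    obtain ⟨cq, hcq⟩ := hP _ hdvd
    rw [Submodule.mem_bot, Submodule.Quotient.mk_eq_zero]
    rw [hI3, Ideal.mem_span_pair]
    exact ⟨cq, b, by linear_combination -hcq⟩
  have hrange : LinearMap.range μ = LinearMap.ker π := by
    apply le_antisymm
    · rintro x ⟨y, rfl⟩
      obtain ⟨z, rfl⟩ := Submodule.Quotient.mk_surjective (I3 : Submodule R2 R2) y
      rw [LinearMap.mem_ker, hμ, Submodule.mapQ_apply, hπ, Submodule.mapQ_apply,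
        Submodule.Quotient.mk_eq_zero]
      show (LinearMap.toSpanSingleton R2 R2 g) z ∈ I1
      rw [LinearMap.toSpanSingleton_apply, smul_eq_mul]
      exact I1.mul_mem_left z hgI1
    · intro x hx
      obtain ⟨w, rfl⟩ := Submodule.Quotient.mk_surjective (I2 : Submodule R2 R2) x
      rw [LinearMap.mem_ker, hπ, Submodule.mapQ_apply, Submodule.Quotient.mk_eq_zero] at hx
      have hx' : (LinearMap.id : R2 →ₗ[R2] R2) w ∈ I1 := hx
      rw [LinearMap.id_apply, hI1, Ideal.mem_span_pair] at hx'
      obtain ⟨a, b, hab⟩ := hx'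
      refine ⟨Submodule.Quotient.mk b, ?_⟩
      rw [hμ, Submodule.mapQ_apply]
      rw [Submodule.Quotient.eq]
      have : (LinearMap.toSpanSingleton R2 R2 g) b - w = (-a) * f + 0 * (g * h) := by
        rw [LinearMap.toSpanSingleton_apply, smul_eq_mul]
        linear_combination hab
      rw [this]
      exact Ideal.mem_span_pair.2 ⟨-a, 0, rfl⟩
  -- pass to ℂ-linear maps
  set π' : (R2 ⧸ I2) →ₗ[ℂ] (R2 ⧸ I1) := π.restrictScalars ℂ with hπ'
  set μ' : (R2 ⧸ I3) →ₗ[ℂ] (R2 ⧸ I2) := μ.restrictScalars ℂ with hμ'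
  have e1 : Module.rank ℂ ↥(LinearMap.range π') + Module.rank ℂ ↥(LinearMap.ker π')
      = Module.rank ℂ (R2 ⧸ I2) := LinearMap.rank_range_add_rank_ker π'
  have e2 : LinearMap.range π' = ⊤ := LinearMap.range_eq_top.2 hπs
  have e3 : LinearMap.ker π' = LinearMap.range μ' := by
    ext x
    constructor
    · intro hx
      have : x ∈ LinearMap.ker π := hx
      rw [← hrange] at this
      obtain ⟨y, hy⟩ := this
      exact ⟨y, hy⟩
    · rintro ⟨y, rfl⟩
      have : μ y ∈ LinearMap.range μ := ⟨y, rfl⟩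
      rw [hrange] at this
      exact this
  have e4 : Module.rank ℂ ↥(LinearMap.range μ') = Module.rank ℂ (R2 ⧸ I3) :=
    rank_range_of_injective μ' hμinj
  rw [e2, e3, e4] at e1
  rw [← e1, rank_top]

end InterNumAux

/-- The intersection number is additive in products: `m(f, g·h) = m(f,g) + m(f,h)`,
in `ℕ ∪ {∞}`. -/
theorem interNum_mul (f g h : MvPowerSeries (Fin 2) ℂ) :
    interNum f (g * h) = interNum f g + interNum f h := by
  by_cases hP : ∀ z, f ∣ g * z → f ∣ z
  · unfold interNum
    rw [rank_add f g h hP, map_add]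
  · push_neg at hP
    obtain ⟨z, hz1, hz2⟩ := hP
    have L1 := rank_infinite_of_not_P z hz1 hz2
    have hgh : f ∣ (g * h) * z := by
      obtain ⟨w, hw⟩ := hz1
      exact ⟨w * h, by linear_combination h * hw⟩
    have L2 := rank_infinite_of_not_P z hgh hz2
    unfold interNum
    rw [Cardinal.toENat_eq_top.2 L2, Cardinal.toENat_eq_top.2 L1, top_add]
end

section
/- Let γ(t) = (t^m, y(t)) be a parametrisation with x(t) = t^m, ord(y) = n > m, leading coefficient a ≠ 0. If 2m < n, then for every complex circle through the origin, A(x²+y²) + 2Bx + 2Cy with (A,B,C) ≠ 0, the order of A(x(t)²+y(t)²) + 2Bx(t) + 2Cy(t) is: m if B ≠ 0; 2m if B = 0 and A ≠ 0; and n if A = B = 0. -/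
open PowerSeries

lemma sq_coeff_zero (n : ℕ) (hn0 : 0 < n) (y : PowerSeries ℂ)
    (hylow : ∀ j < n, PowerSeries.coeff j y = 0) :
    ∀ k ≤ n, PowerSeries.coeff k (y ^ 2) = 0 := by
  intro k hk
  rw [sq, PowerSeries.coeff_mul]
  apply Finset.sum_eq_zero
  rintro ⟨i, j⟩ hij
  rw [Finset.HasAntidiagonal.mem_antidiagonal] at hij
  by_cases hi : i < n
  · simp [hylow i hi]
  · have : j < n := by omega
    simp [hylow j this]

/-- For `γ(t) = (t^m, y(t))` with `y = a t^n + h.o.t.`, `a ≠ 0`, `n > 2m`, the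
order of contact with the complex circle `A(x²+y²) + 2Bx + 2Cy = 0` through the
origin is `m` if `B ≠ 0`, `2m` if `B = 0` and `A ≠ 0`, and `n` if `A = B = 0`. -/
theorem order_contact_with_circles (m n : ℕ) (hm : 1 ≤ m) (hn : 2 * m < n)
    (a : ℂ) (ha : a ≠ 0) (y : PowerSeries ℂ)
    (hyn : PowerSeries.coeff n y = a)
    (hylow : ∀ j < n, PowerSeries.coeff j y = 0)
    (A B C : ℂ) (hABC : ¬ (A = 0 ∧ B = 0 ∧ C = 0)) :
    letI x : PowerSeries ℂ := (X : PowerSeries ℂ) ^ m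
    letI d : PowerSeries ℂ :=
      PowerSeries.C A * (x ^ 2 + y ^ 2) + 2 * PowerSeries.C B * x +
        2 * PowerSeries.C C * y
    (B ≠ 0 → d.order = (m : ℕ∞)) ∧
      (B = 0 → A ≠ 0 → d.order = ((2 * m : ℕ) : ℕ∞)) ∧
      (A = 0 → B = 0 → d.order = (n : ℕ∞)) := by
  have hn0 : 0 < n := by omega
  have hsq := sq_coeff_zero n hn0 y hylow
  have hxx : ((X : PowerSeries ℂ) ^ m) ^ 2 = X ^ (2 * m) := by
    rw [← pow_mul, mul_comm]
  have hcoeff : ∀ k : ℕ, PowerSeries.coeff k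
      (PowerSeries.C A * ((X ^ m) ^ 2 + y ^ 2) + 2 * PowerSeries.C B * X ^ m +
        2 * PowerSeries.C C * y) =
      A * (if k = 2 * m then 1 else 0) + A * PowerSeries.coeff k (y ^ 2)
        + 2 * B * (if k = m then 1 else 0) + 2 * C * PowerSeries.coeff k y := by
    intro k
    have h2 : (2 : PowerSeries ℂ) = PowerSeries.C 2 := by
      simp [map_ofNat]
    rw [hxx, h2, ← map_mul, ← map_mul, mul_add]
    simp only [map_add, PowerSeries.coeff_C_mul, PowerSeries.coeff_X_pow]
  refine ⟨?_, ?_, ?_⟩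
  · intro hB
    rw [PowerSeries.order_eq_nat]
    constructor
    · rw [hcoeff m]
      have h1 : m ≠ 2 * m := by omega
      have h2 : m < n := by omega
      simp [h1, hylow m h2, hsq m (by omega), hB]
    · intro i hi
      rw [hcoeff i]
      have h1 : i ≠ 2 * m := by omega
      have h2 : i ≠ m := by omega
      simp [h1, h2, hylow i (by omega), hsq i (by omega)]
  · intro hB hA
    rw [PowerSeries.order_eq_nat]
    constructor
    · rw [hcoeff (2 * m)]
      by_cases hmm : 2 * m = m
      · omega
      · simp [hmm, hylow (2 * m) hn, hsq (2 * m) (by omega), hA]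
    · intro i hi
      rw [hcoeff i]
      have h1 : i ≠ 2 * m := by omega
      simp [h1, hB, hylow i (by omega), hsq i (by omega)]
  · intro hA hB
    have hC : C ≠ 0 := by tauto
    rw [PowerSeries.order_eq_nat]
    constructor
    · rw [hcoeff n]
      simp [hA, hB, hyn, hC, ha]
    · intro i hi
      rw [hcoeff i]
      simp [hA, hB, hylow i hi]
end
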